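/- For normal M ∈ M_N(ℂ) with eigenvalues z₁,…,z_N, the rank-k numerical range Λ_k(M) is contained in the intersection over all index sets J with |J| = N-k+1 of conv{z_j : j ∈ J}. -/
import Mathlib


open Matrix BigOperators Finset

noncomputable section

/-- Numerical range of a complex matrix. -/
def NumRange {n : ℕ} (M : Matrix (Fin n) (Fin n) ℂ) : Set ℂ :=
  { c | ∃ u : Fin n → ℂ, star u ⬝ᵥ u = 1 ∧ star u ⬝ᵥ M.mulVec u = c }

/-- `C` is a rank-`k` compression of `M`: `C` represents `P_S M |_S` in some
orthonormal basis of a `k`-dimensional subspace `S`. -/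
def IsCompression {N k : ℕ} (M : Matrix (Fin N) (Fin N) ℂ)
    (C : Matrix (Fin k) (Fin k) ℂ) : Prop :=
  ∃ f : Fin k → (Fin N → ℂ),
    (∀ i j, star (f i) ⬝ᵥ f j = if i = j then 1 else 0) ∧
    (∀ i j, C i j = star (f i) ⬝ᵥ M.mulVec (f j))

/-- `diag(a,b)` is a compression of `M`. -/
def IsDiagCompression {N : ℕ} (M : Matrix (Fin N) (Fin N) ℂ) (a b : ℂ) : Prop :=
  ∃ u w : Fin N → ℂ,
    star u ⬝ᵥ u = 1 ∧ star w ⬝ᵥ w = 1 ∧ star u ⬝ᵥ w = 0 ∧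
    star u ⬝ᵥ M.mulVec u = a ∧ star w ⬝ᵥ M.mulVec w = b ∧
    star u ⬝ᵥ M.mulVec w = 0 ∧ star w ⬝ᵥ M.mulVec u = 0

/-- The rank-`k` numerical range `Λ_k(M)`. -/
def rankNumRange {N : ℕ} (k : ℕ) (M : Matrix (Fin N) (Fin N) ℂ) : Set ℂ :=
  { c | ∃ P : Matrix (Fin N) (Fin N) ℂ,
      P.IsHermitian ∧ P * P = P ∧ P.rank = k ∧ P * M * P = c • P }

/-- `M` has an orthonormal basis of eigenvectors with eigenvalue list `z`. -/
def HasONEigenbasis {N : ℕ} (M : Matrix (Fin N) (Fin N) ℂ) (z : Fin N → ℂ) : Prop :=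
  ∃ f : Fin N → (Fin N → ℂ),
    (∀ i j, star (f i) ⬝ᵥ f j = if i = j then 1 else 0) ∧
    (∀ j, M.mulVec (f j) = z j • f j)

/-- 2D cross product of complex numbers viewed as plane vectors. -/
def cross2 (p q : ℂ) : ℝ := p.re * q.im - p.im * q.re


lemma dot_sum' {ι n : Type*} [Fintype n] (s : Finset ι) (u : n → ℂ) (w : ι → n → ℂ) :
    u ⬝ᵥ (∑ j ∈ s, w j) = ∑ j ∈ s, u ⬝ᵥ w j := by
  simp only [dotProduct, Finset.sum_apply, Finset.mul_sum]
  exact Finset.sum_comm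

lemma sum_dot' {ι n : Type*} [Fintype n] (s : Finset ι) (u : n → ℂ) (w : ι → n → ℂ) :
    (∑ j ∈ s, w j) ⬝ᵥ u = ∑ j ∈ s, w j ⬝ᵥ u := by
  simp only [dotProduct, Finset.sum_apply, Finset.sum_mul]
  exact Finset.sum_comm

lemma dot_expand {N : ℕ} {f : Fin N → Fin N → ℂ}
    (hON : ∀ i j, star (f i) ⬝ᵥ f j = if i = j then 1 else 0)
    {ι : Type*} [Fintype ι] [DecidableEq ι] (e : ι → Fin N) (he : Function.Injective e)
    (a b : ι → ℂ) :
    star (∑ i, a i • f (e i)) ⬝ᵥ (∑ j, b j • f (e j))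
      = ∑ i, star (a i) * b i := by
  rw [star_sum]
  simp only [star_smul]
  rw [sum_dot' Finset.univ]
  refine Finset.sum_congr rfl fun i _ => ?_
  rw [smul_dotProduct, dot_sum' Finset.univ]
  have h : ∀ j, (star (f (e i)) ⬝ᵥ (b j • f (e j))) = if i = j then b j else 0 := by
    intro j
    rw [dotProduct_smul, hON]
    by_cases h : i = j
    · simp [h]
    · have : ¬ e i = e j := fun hej => h (he hej)
      simp [h, this]
  simp only [h]
  rw [Finset.sum_ite_eq Finset.univ i b]
  simp [smul_eq_mul]

theorem stmt_6 {N k : ℕ} (M : Matrix (Fin N) (Fin N) ℂ)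
    (hM : M * Mᴴ = Mᴴ * M) (z : Fin N → ℂ) (hz : HasONEigenbasis M z) :
    rankNumRange k M ⊆
      ⋂ J ∈ {J : Finset (Fin N) | J.card = N - k + 1}, convexHull ℝ (z '' ↑J) := by
  rintro lam ⟨P, hPh, hP2, hrank, hPMP⟩
  obtain ⟨f, hON, hEig⟩ := hz
  simp only [Set.mem_iInter, Set.mem_setOf_eq]
  intro J hJ
  -- linear independence of f
  have hli : LinearIndependent ℂ f := by
    rw [linearIndependent_iff']
    intro s g hg i hi
    have h := congrArg (fun v => star (f i) ⬝ᵥ v) hg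
    simp only [dotProduct_zero] at h
    rw [dot_sum' s] at h
    simp only [dotProduct_smul, hON, smul_eq_mul, mul_ite, mul_one, mul_zero] at h
    rwa [Finset.sum_ite_eq s i g, if_pos hi] at h
  -- subtype family
  set e : J → Fin N := Subtype.val with he_def
  have he : Function.Injective e := Subtype.val_injective
  have hgli : LinearIndependent ℂ (fun i : J => f (e i)) := hli.comp e he
  -- dimension count
  set S := LinearMap.range P.mulVecLin with hS_def
  set T := Submodule.span ℂ (Set.range fun i : J => f (e i)) with hT_def
  have hS : Module.finrank ℂ S = k := hrank
  have hT : Module.finrank ℂ T = N - k + 1 := by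
    rw [hT_def, finrank_span_eq_card hgli, Fintype.card_coe, hJ]
  have hkN : k ≤ N := by
    rw [← hrank]
    simpa using P.rank_le_card_height
  have hsum := Submodule.finrank_sup_add_finrank_inf_eq S T
  have hsup : Module.finrank ℂ ↥(S ⊔ T) ≤ N := by
    have := Submodule.finrank_le (S ⊔ T)
    simpa [Module.finrank_fintype_fun_eq_card] using this
  have hbot : S ⊓ T ≠ ⊥ := by
    intro h0
    rw [h0, finrank_bot, hS, hT] at hsum
    omega
  obtain ⟨v, hv, hv0⟩ := Submodule.exists_mem_ne_zero_of_ne_bot hbot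
  have hvS : v ∈ S := hv.1
  have hvT : v ∈ T := hv.2
  -- v is fixed by P
  obtain ⟨w, hw⟩ := hvS
  have hw' : P.mulVec w = v := by rwa [Matrix.mulVecLin_apply] at hw
  have hPv : P.mulVec v = v := by
    rw [← hw', Matrix.mulVec_mulVec, hP2]
  -- coefficients
  rw [hT_def, Submodule.mem_span_range_iff_exists_fun] at hvT
  obtain ⟨c, hc⟩ := hvT
  -- dot product computations
  set s : ℝ := ∑ i : J, Complex.normSq (c i) with hs_def
  have hstar : ∀ x : ℂ, star x * x = (Complex.normSq x : ℂ) := by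
    intro x
    rw [Complex.star_def, mul_comm, Complex.mul_conj]
  have h1 : star v ⬝ᵥ v = (s : ℂ) := by
    rw [← hc, dot_expand hON e he c c, hs_def]
    push_cast
    exact Finset.sum_congr rfl fun i _ => hstar (c i)
  have hMv : M.mulVec v = ∑ i : J, (c i * z (e i)) • f (e i) := by
    rw [← hc, ← Matrix.mulVecLin_apply, map_sum]
    refine Finset.sum_congr rfl fun i _ => ?_
    rw [_root_.map_smul, Matrix.mulVecLin_apply, hEig, smul_smul]
  have h2 : star v ⬝ᵥ M.mulVec v = ∑ i : J, (Complex.normSq (c i) : ℂ) * z (e i) := by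
    rw [hMv]
    nth_rewrite 1 [← hc]
    rw [dot_expand hON e he c (fun i => c i * z (e i))]
    exact Finset.sum_congr rfl fun i _ => by rw [← mul_assoc, hstar]
  -- lam equation
  have hkey : ∀ u, star v ⬝ᵥ P.mulVec u = star v ⬝ᵥ u := by
    intro u
    rw [dotProduct_mulVec]
    congr 1
    have h := Matrix.star_mulVec P v
    rw [hPv, hPh.eq] at h
    exact h.symm
  have hPMPv : P.mulVec (M.mulVec v) = lam • v := by
    have h := congrArg (fun A => A.mulVec v) hPMP
    simp only [← Matrix.mulVec_mulVec, Matrix.smul_mulVec, hPv] at h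
    exact h
  have h3 : star v ⬝ᵥ M.mulVec v = lam * (star v ⬝ᵥ v) := by
    rw [← hkey (M.mulVec v), hPMPv, dotProduct_smul, smul_eq_mul]
  -- positivity of s
  have hs_nonneg : ∀ i ∈ (Finset.univ : Finset J), 0 ≤ Complex.normSq (c i) :=
    fun i _ => Complex.normSq_nonneg _
  have hs_pos : 0 < s := by
    rcases (Finset.sum_nonneg hs_nonneg).lt_or_eq with h | h
    · exact h
    · exfalso
      apply hv0
      rw [← hc]
      have hall := (Finset.sum_eq_zero_iff_of_nonneg hs_nonneg).mp h.symm
      refine Finset.sum_eq_zero fun i _ => ?_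
      rw [Complex.normSq_eq_zero.mp (hall i (Finset.mem_univ i)), zero_smul]
  -- conclude via center of mass
  have hmem := Finset.centerMass_mem_convexHull (s := z '' ↑J) (Finset.univ : Finset J)
    hs_nonneg (by rwa [← hs_def]) (z := fun i : J => z (e i))
    (fun i _ => ⟨e i, i.2, rfl⟩)
  have hlam : (Finset.univ : Finset J).centerMass (fun i => Complex.normSq (c i))
      (fun i : J => z (e i)) = lam := by
    rw [Finset.centerMass, ← hs_def]
    have hsumz : ∑ i : J, Complex.normSq (c i) • z (e i) = lam * (s : ℂ) := by
      rw [← h1, ← h3, h2]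
      exact Finset.sum_congr rfl fun i _ => Complex.real_smul
    rw [hsumz, Complex.real_smul, Complex.ofReal_inv]
    have hs0 : (s : ℂ) ≠ 0 := by exact_mod_cast hs_pos.ne'
    field_simp
  rwa [hlam] at hmem
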